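/- arXiv:1909.10844 — 4 statements merged into one kernel-verified Lean document; each statement's English description precedes it below -/
import Mathlib

section
/- For all nonnegative integers a, m, r with 0 ≤ r ≤ 2^a, one has the polynomial identity B_{m·2^a + r}(t) = B_{2^a − r}(t)·B_m(t) + B_r(t)·B_{m+1}(t) in ℤ[t]. -/
open Polynomial

/-- The Stern polynomials: `B 0 = 0`, `B 1 = 1`, `B (2n) = t * B n`,
`B (2n+1) = B n + B (n+1)`. -/
noncomputable def sternPoly : ℕ → Polynomial ℤ
  | 0 => 0
  | 1 => 1
  | n + 2 =>
    if h : (n + 2) % 2 = 0 then X * sternPoly ((n + 2) / 2)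
    else sternPoly ((n + 2) / 2) + sternPoly ((n + 2) / 2 + 1)
decreasing_by all_goals omega

lemma sternPoly_even (n : ℕ) : sternPoly (2 * n) = X * sternPoly n := by
  match n with
  | 0 => simp [sternPoly]
  | k + 1 =>
    have h : 2 * (k + 1) = 2 * k + 2 := by ring
    rw [h, sternPoly]
    have h2 : (2 * k + 2) % 2 = 0 := by omega
    rw [dif_pos h2]
    have h3 : (2 * k + 2) / 2 = k + 1 := by omega
    rw [h3]

lemma sternPoly_odd (n : ℕ) : sternPoly (2 * n + 1) = sternPoly n + sternPoly (n + 1) := by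
  match n with
  | 0 => simp [sternPoly]
  | k + 1 =>
    have h : 2 * (k + 1) + 1 = (2 * k + 1) + 2 := by ring
    rw [h, sternPoly]
    have h2 : ((2 * k + 1) + 2) % 2 ≠ 0 := by omega
    rw [dif_neg h2]
    have h3 : ((2 * k + 1) + 2) / 2 = k + 1 := by omega
    rw [h3]

set_option linter.unnecessarySimpa false in
lemma sternPoly_two : sternPoly 2 = X := by
  have := sternPoly_even 1
  simpa [sternPoly] using this

theorem stern_split_add (a m r : ℕ) (hr : r ≤ 2 ^ a) :
    sternPoly (m * 2 ^ a + r) =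
      sternPoly (2 ^ a - r) * sternPoly m + sternPoly r * sternPoly (m + 1) := by
  induction a generalizing m r with
  | zero =>
    interval_cases r <;> simp [sternPoly]
  | succ a ih =>
    have hmid : ∀ s, s ≤ 2 ^ a →
        sternPoly (2 ^ a + s) = sternPoly (2 ^ a - s) + X * sternPoly s := by
      intro s hs
      have := ih 1 s hs
      simpa [sternPoly, sternPoly_two, one_mul, mul_comm] using this
    by_cases h : r ≤ 2 ^ a
    · have key : m * 2 ^ (a + 1) + r = (2 * m) * 2 ^ a + r := by ring
      rw [key, ih (2 * m) r h, sternPoly_even, sternPoly_odd]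
      have h2 : 2 ^ (a + 1) - r = 2 ^ a + (2 ^ a - r) := by
        have : 2 ^ (a + 1) = 2 ^ a + 2 ^ a := by ring
        omega
      rw [h2, hmid (2 ^ a - r) (by omega)]
      have h3 : 2 ^ a - (2 ^ a - r) = r := by omega
      rw [h3]
      ring
    · push_neg at h
      obtain ⟨s, rfl⟩ : ∃ s, r = 2 ^ a + s := ⟨r - 2 ^ a, by omega⟩
      have hpow : 2 ^ (a + 1) = 2 ^ a + 2 ^ a := by ring
      have hs2 : s ≤ 2 ^ a := by omega
      have key : m * 2 ^ (a + 1) + (2 ^ a + s) = (2 * m + 1) * 2 ^ a + s := by ring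
      have h5 : 2 ^ (a + 1) - (2 ^ a + s) = 2 ^ a - s := by omega
      rw [key, ih (2 * m + 1) s hs2, sternPoly_odd, h5]
      have h2m2 : 2 * m + 1 + 1 = 2 * (m + 1) := by ring
      rw [h2m2, sternPoly_even, hmid s hs2]
      ring
end

section
/- For every integer n ≥ 4, B_{2^n − 9}(t) = t·\sum_{i=0}^{n−5} t^i + (t^2+t+1)·\sum_{i=0}^{n−4} t^i in ℤ[t] (the first sum being empty when n = 4). -/
open Polynomial

lemma stern_even (n : ℕ) (h : 1 ≤ n) : sternPoly (2 * n) = X * sternPoly n := by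
  obtain ⟨k, rfl⟩ : ∃ k, n = k + 1 := ⟨n - 1, by omega⟩
  show sternPoly (2 * k + 2) = _
  rw [sternPoly]
  have h2 : (2 * k + 2) % 2 = 0 := by omega
  have h3 : (2 * k + 2) / 2 = k + 1 := by omega
  simp [h2, h3]

lemma stern_odd (n : ℕ) (h : 1 ≤ n) :
    sternPoly (2 * n + 1) = sternPoly n + sternPoly (n + 1) := by
  obtain ⟨k, rfl⟩ : ∃ k, n = k + 1 := ⟨n - 1, by omega⟩
  show sternPoly (2 * k + 3) = _
  have e : 2 * k + 3 = (2 * k + 1) + 2 := by omega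
  rw [e, sternPoly]
  have h2 : ¬ (2 * k + 1 + 2) % 2 = 0 := by omega
  have h3 : (2 * k + 1 + 2) / 2 = k + 1 := by omega
  rw [dif_neg h2, h3]

lemma stern_pow (m : ℕ) : sternPoly (2 ^ m) = X ^ m := by
  induction m with
  | zero => simp [sternPoly]
  | succ k ih =>
    have : (2 : ℕ) ^ (k + 1) = 2 * 2 ^ k := by ring
    rw [this, stern_even _ (Nat.one_le_two_pow), ih, pow_succ]
    ring

lemma stern_pow_sub_one (m : ℕ) :
    sternPoly (2 ^ (m + 1) - 1) = ∑ i ∈ Finset.range (m + 1), (X : Polynomial ℤ) ^ i := by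
  induction m with
  | zero => simp [sternPoly]
  | succ k ih =>
    have hp : (2:ℕ) ^ (k + 2) = 2 * 2 ^ (k + 1) := by ring
    have hq : (2:ℕ) ^ (k + 1) = 2 * 2 ^ k := by ring
    have hb : 1 ≤ (2:ℕ) ^ k := Nat.one_le_two_pow
    have h1 : 1 ≤ 2 ^ (k + 1) - 1 := by omega
    have e : 2 ^ (k + 2) - 1 = 2 * (2 ^ (k + 1) - 1) + 1 := by omega
    have e2 : 2 ^ (k + 1) - 1 + 1 = 2 ^ (k + 1) := by omega
    rw [e, stern_odd _ h1, e2, ih, stern_pow, Finset.sum_range_succ _ (k + 1),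
      Finset.sum_range_succ _ k]

lemma stern_pow_sub_two (m : ℕ) :
    sternPoly (2 ^ (m + 2) - 2) = X * ∑ i ∈ Finset.range (m + 1), (X : Polynomial ℤ) ^ i := by
  have hp : (2:ℕ) ^ (m + 2) = 2 * 2 ^ (m + 1) := by ring
  have hq : (2:ℕ) ^ (m + 1) = 2 * 2 ^ m := by ring
  have hb : 1 ≤ (2:ℕ) ^ m := Nat.one_le_two_pow
  have e : 2 ^ (m + 2) - 2 = 2 * (2 ^ (m + 1) - 1) := by omega
  have h1 : 1 ≤ 2 ^ (m + 1) - 1 := by omega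
  rw [e, stern_even _ h1, stern_pow_sub_one]

lemma stern_pow_sub_three (m : ℕ) :
    sternPoly (2 ^ (m + 2) - 3) =
      X * ∑ i ∈ Finset.range m, (X : Polynomial ℤ) ^ i
        + ∑ i ∈ Finset.range (m + 1), (X : Polynomial ℤ) ^ i := by
  cases m with
  | zero => simp [show (2:ℕ)^2 - 3 = 1 from rfl, sternPoly]
  | succ k =>
    have hp : (2:ℕ) ^ (k + 1 + 2) = 2 * 2 ^ (k + 2) := by ring
    have hq : (2:ℕ) ^ (k + 2) = 4 * 2 ^ k := by ring
    have hb : 1 ≤ (2:ℕ) ^ k := Nat.one_le_two_pow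
    have e : 2 ^ (k + 1 + 2) - 3 = 2 * (2 ^ (k + 2) - 2) + 1 := by omega
    have h1 : 1 ≤ 2 ^ (k + 2) - 2 := by omega
    have e2 : 2 ^ (k + 2) - 2 + 1 = 2 ^ (k + 2) - 1 := by omega
    rw [e, stern_odd _ h1, e2, stern_pow_sub_two,
      show (2:ℕ) ^ (k + 2) - 1 = 2 ^ ((k + 1) + 1) - 1 from rfl, stern_pow_sub_one]

theorem stern_two_pow_sub_nine (n : ℕ) (hn : 4 ≤ n) :
    sternPoly (2 ^ n - 9) =
      X * ∑ i ∈ Finset.range (n - 4), (X : Polynomial ℤ) ^ i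
        + (X ^ 2 + X + 1) * ∑ i ∈ Finset.range (n - 3), (X : Polynomial ℤ) ^ i := by
  obtain ⟨m, rfl⟩ : ∃ m, n = m + 4 := ⟨n - 4, by omega⟩
  have h16 : 16 ≤ 2 ^ (m + 4) := by
    calc (16:ℕ) = 2 ^ 4 := rfl
    _ ≤ 2 ^ (m + 4) := Nat.pow_le_pow_right (by norm_num) (by omega)
  have h8 : 8 ≤ 2 ^ (m + 3) := by
    calc (8:ℕ) = 2 ^ 3 := rfl
    _ ≤ 2 ^ (m + 3) := Nat.pow_le_pow_right (by norm_num) (by omega)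
  have e : 2 ^ (m + 4) - 9 = 2 * (2 ^ (m + 3) - 5) + 1 := by
    have : 2 ^ (m + 4) = 2 * 2 ^ (m + 3) := by ring
    omega
  have e1 : 2 ^ (m + 3) - 5 = 2 * (2 ^ (m + 2) - 3) + 1 := by
    have : 2 ^ (m + 3) = 2 * 2 ^ (m + 2) := by ring
    omega
  have e2 : 2 ^ (m + 3) - 5 + 1 = 2 * (2 ^ (m + 2) - 2) := by
    have : 2 ^ (m + 3) = 2 * 2 ^ (m + 2) := by ring
    omega
  have h5 : 1 ≤ 2 ^ (m + 3) - 5 := by omega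
  have h3 : 1 ≤ 2 ^ (m + 2) - 3 := by omega
  have h2 : 1 ≤ 2 ^ (m + 2) - 2 := by omega
  rw [e, stern_odd _ h5, e2, e1, stern_odd _ h3, stern_even _ h2,
    stern_pow_sub_three, stern_pow_sub_two,
    show 2 ^ (m + 2) - 3 + 1 = 2 ^ (m + 2) - 2 by omega, stern_pow_sub_two,
    show m + 4 - 4 = m by omega, show m + 4 - 3 = m + 1 by omega]
  ring
end

section
/- One has B_{p_{2,1}}(t) = 1 + 2t, and for every integer n ≥ 2, B_{p_{2,n}}(t) = 1 + 2\sum_{i=1}^{n−1}(i+1)t^i + 2t^{n−1}\sum_{i=1}^{n−1}(n+1−i)t^i + 2t^{2n−1} in ℤ[t]. -/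
open Polynomial

/-- `p k n = 2^(2n+k) - 3·2^(n+k-1) + 2^k - 3`. -/
def pSeq (k n : ℕ) : ℕ := 2 ^ (2 * n + k) - 3 * 2 ^ (n + k - 1) + 2 ^ k - 3

namespace SternAux

open Finset

lemma stern_even (m : ℕ) : sternPoly (2 * m) = X * sternPoly m := by
  match m with
  | 0 => simp [sternPoly]
  | m + 1 =>
    rw [show 2 * (m + 1) = 2 * m + 2 from rfl, sternPoly]
    have h : (2 * m + 2) % 2 = 0 := by omega
    rw [dif_pos h, show (2 * m + 2) / 2 = m + 1 by omega]

lemma stern_odd (m : ℕ) : sternPoly (2 * m + 1) = sternPoly m + sternPoly (m + 1) := by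
  match m with
  | 0 => simp [sternPoly]
  | m + 1 =>
    rw [show 2 * (m + 1) + 1 = (2 * m + 1) + 2 from rfl, sternPoly]
    have h : ¬ ((2 * m + 1 + 2) % 2 = 0) := by omega
    rw [dif_neg h]
    have : (2 * m + 1 + 2) / 2 = m + 1 := by omega
    rw [this]

lemma stern_pow2_mul (j a : ℕ) : sternPoly (2 ^ j * a) = X ^ j * sternPoly a := by
  induction j with
  | zero => simp
  | succ j ih =>
    rw [show 2 ^ (j + 1) * a = 2 * (2 ^ j * a) by ring, stern_even, ih, pow_succ]
    ring

lemma stern_one : sternPoly 1 = 1 := by rw [sternPoly]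

lemma stern_pow2 (j : ℕ) : sternPoly (2 ^ j) = X ^ j := by
  simpa [stern_one] using stern_pow2_mul j 1

lemma stern_pow2_mul_add_one (j a : ℕ) :
    sternPoly (2 ^ j * a + 1) = (∑ i ∈ range j, X ^ i) * sternPoly a + sternPoly (a + 1) := by
  induction j with
  | zero => simp
  | succ j ih =>
    rw [show 2 ^ (j + 1) * a + 1 = 2 * (2 ^ j * a) + 1 by ring, stern_odd, stern_pow2_mul,
      ih, Finset.sum_range_succ]
    ring

lemma stern_mersenne (m : ℕ) : sternPoly (2 ^ m - 1) = ∑ i ∈ range m, X ^ i := by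
  induction m with
  | zero => simp [sternPoly]
  | succ m ih =>
    have h2 : 1 ≤ 2 ^ m := Nat.one_le_two_pow
    rw [show 2 ^ (m + 1) - 1 = 2 * (2 ^ m - 1) + 1 by omega, stern_odd, ih,
      show 2 ^ m - 1 + 1 = 2 ^ m by omega, stern_pow2, Finset.sum_range_succ]

lemma sum_Icc_X (k : ℕ) : ∑ i ∈ Icc 1 k, (X:ℤ[X]) ^ i = X * ∑ i ∈ range k, X ^ i := by
  rw [show Icc 1 k = Ico 1 (k+1) by rw [Finset.Ico_add_one_right_eq_Icc], Finset.sum_Ico_eq_sum_range,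
    Finset.mul_sum]
  simp only [Nat.add_sub_cancel]
  simp [pow_add]

lemma sum_range_X (k : ℕ) :
    ∑ i ∈ range (k+1), (X:ℤ[X]) ^ i = 1 + ∑ i ∈ Icc 1 k, X ^ i := by
  rw [Finset.sum_range_succ', sum_Icc_X, Finset.mul_sum]
  simp [pow_succ, mul_comm]
  ring

lemma stern_a (k : ℕ) : sternPoly (2 ^ (k + 2) - 3) = 1 + 2 * ∑ i ∈ Icc 1 k, X ^ i := by
  have h2 : 4 ≤ 2 ^ (k + 2) := by
    calc (4:ℕ) = 2 ^ 2 := rfl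
    _ ≤ 2 ^ (k + 2) := Nat.pow_le_pow_right (by norm_num) (by omega)
  have h1 : 2 ≤ 2 ^ (k + 1) := by
    calc (2:ℕ) = 2 ^ 1 := rfl
    _ ≤ 2 ^ (k + 1) := Nat.pow_le_pow_right (by norm_num) (by omega)
  rw [show 2 ^ (k + 2) - 3 = 2 * (2 ^ (k + 1) - 2) + 1 by
      have : 2 ^ (k + 2) = 2 * 2 ^ (k + 1) := by ring
      omega,
    stern_odd, show 2 ^ (k + 1) - 2 = 2 * (2 ^ k - 1) by
      have : 2 ^ (k + 1) = 2 * 2 ^ k := by ring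
      omega,
    stern_even, stern_mersenne, show 2 * (2 ^ k - 1) + 1 = 2 ^ (k + 1) - 1 by
      have : 2 ^ (k + 1) = 2 * 2 ^ k := by ring
      omega,
    stern_mersenne]
  rw [sum_Icc_X, Finset.sum_range_succ']
  simp only [pow_succ, pow_zero]
  rw [← Finset.sum_mul]
  ring

lemma stern_pSeq (k : ℕ) :
    sternPoly (pSeq 2 (k + 1)) =
      (1 + (∑ i ∈ Icc 1 k, (X:ℤ[X]) ^ i) + X ^ (k+1)) * (1 + 2 * ∑ i ∈ Icc 1 k, X ^ i)
        + X * (1 + ∑ i ∈ Icc 1 k, X ^ i) := by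
  have h4 : 4 ≤ 2 ^ (k + 2) := by
    calc (4:ℕ) = 2 ^ 2 := rfl
    _ ≤ 2 ^ (k + 2) := Nat.pow_le_pow_right (by norm_num) (by omega)
  have h1 : 1 ≤ 2 ^ (k + 1) := Nat.one_le_two_pow
  have hp : pSeq 2 (k + 1) = 2 ^ (k + 2) * (2 ^ (k + 2) - 3) + 1 := by
    obtain ⟨b, hb⟩ : ∃ b, 2 ^ (k + 2) = b + 4 := ⟨2 ^ (k + 2) - 4, by omega⟩
    have e1 : 2 ^ (2 * (k + 1) + 2) = 2 ^ (k + 2) * 2 ^ (k + 2) := by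
      rw [← pow_add]
      congr 1
      omega
    have e2 : (k + 1) + 2 - 1 = k + 2 := by omega
    rw [pSeq, e1, e2, hb]
    have e3 : (b + 4) * (b + 4) = b * b + 8 * b + 16 := by ring
    have e4 : (b + 4) * (b + 4 - 3) = b * b + 5 * b + 4 := by
      rw [show b + 4 - 3 = b + 1 by omega]; ring
    rw [e3, e4]
    generalize b * b = s
    omega
  rw [hp, stern_pow2_mul_add_one, stern_a,
    show 2 ^ (k + 2) - 3 + 1 = 2 * (2 ^ (k + 1) - 1) by
      have : 2 ^ (k + 2) = 2 * 2 ^ (k + 1) := by ring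
      omega,
    stern_even, stern_mersenne]
  have e5 : ∑ i ∈ range (k+2), (X:ℤ[X]) ^ i = 1 + (∑ i ∈ Icc 1 k, X ^ i) + X ^ (k+1) := by
    rw [Finset.sum_range_succ, sum_range_X]
  rw [e5, sum_range_X]

lemma lemA (k : ℕ) : (∑ i ∈ Icc 1 k, (X:ℤ[X]) ^ i) * (X - 1) = X ^ (k+1) - X := by
  induction k with
  | zero => simp
  | succ k ih =>
    rw [Finset.sum_Icc_succ_top (by omega : 1 ≤ k + 1), add_mul, ih]
    ring

lemma lemW (k : ℕ) : (∑ i ∈ Icc 1 k, C ((i:ℤ) + 1) * X ^ i) * (X - 1)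
    = ((k : ℤ[X]) + 1) * X ^ (k+1) - X - ∑ i ∈ Icc 1 k, X ^ i := by
  induction k with
  | zero => simp
  | succ k ih =>
    rw [Finset.sum_Icc_succ_top (by omega : 1 ≤ k + 1),
      Finset.sum_Icc_succ_top (by omega : 1 ≤ k + 1), add_mul, ih]
    simp only [C_add, C_1, C_eq_natCast]
    push_cast
    ring

lemma lemV (k : ℕ) : (∑ i ∈ Icc 1 k, C ((k:ℤ) + 2 - i) * X ^ i) * (X - 1)
    = 2 * X ^ (k+1) + (∑ i ∈ Icc 1 k, X ^ i) - ((k : ℤ[X]) + 2) * X := by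
  induction k with
  | zero => simp
  | succ k ih =>
    have hsplit : ∑ i ∈ Icc 1 (k+1), C (((k+1:ℕ):ℤ) + 2 - i) * (X:ℤ[X]) ^ i
        = (∑ i ∈ Icc 1 k, C ((k:ℤ) + 2 - i) * X ^ i) + (∑ i ∈ Icc 1 k, X ^ i)
          + 2 * X ^ (k+1) := by
      rw [Finset.sum_Icc_succ_top (by omega : 1 ≤ k + 1), ← Finset.sum_add_distrib]
      congr 1
      · refine Finset.sum_congr rfl fun i _ => ?_
        rw [show ((k+1:ℕ):ℤ) + 2 - (i:ℤ) = ((k:ℤ) + 2 - i) + 1 by push_cast; ring, C_add, C_1]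
        ring
      · norm_num
    rw [hsplit, Finset.sum_Icc_succ_top (by omega : 1 ≤ k + 1), add_mul, add_mul, ih, lemA]
    push_cast
    ring

lemma lemKey (k : ℕ) :
    (1 + (∑ i ∈ Icc 1 k, (X:ℤ[X]) ^ i) + X ^ (k+1)) * (1 + 2 * ∑ i ∈ Icc 1 k, X ^ i)
      + X * (1 + ∑ i ∈ Icc 1 k, X ^ i)
    = 1 + 2 * (∑ i ∈ Icc 1 k, C ((i:ℤ) + 1) * X ^ i)
      + 2 * X ^ k * (∑ i ∈ Icc 1 k, C ((k:ℤ) + 2 - i) * X ^ i)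
      + 2 * X ^ (2*k+1) := by
  have hX : ((X : ℤ[X]) - 1) ≠ 0 := by simpa using X_sub_C_ne_zero (1:ℤ)
  apply mul_right_cancel₀ (pow_ne_zero 2 hX)
  have hA := lemA k
  have hW := lemW k
  have hV := lemV k
  linear_combination (2*X*(∑ i ∈ Icc 1 k, (X:ℤ[X]) ^ i) - 2*(∑ i ∈ Icc 1 k, (X:ℤ[X]) ^ i)
      + X^2 + 2*X^2*X^k - 2*X^k - 1) * hA
    + (-2*(X-1)) * hW + (-2*X^k*(X-1)) * hV

end SternAux

theorem stern_p_two_explicit :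
    sternPoly (pSeq 2 1) = 1 + 2 * X ∧
      ∀ n : ℕ, 2 ≤ n →
        sternPoly (pSeq 2 n) =
          1 + 2 * ∑ i ∈ Finset.Icc 1 (n - 1), C ((i : ℤ) + 1) * X ^ i
            + 2 * X ^ (n - 1) * ∑ i ∈ Finset.Icc 1 (n - 1), C ((n : ℤ) + 1 - i) * X ^ i
            + 2 * X ^ (2 * n - 1) := by
  constructor
  · have h := SternAux.stern_pSeq 0
    simp at h
    rw [h]
    ring
  · intro n hn
    obtain ⟨k, rfl⟩ : ∃ k, n = k + 1 := ⟨n - 1, by omega⟩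
    rw [SternAux.stern_pSeq k, SternAux.lemKey k]
    simp only [Nat.add_sub_cancel]
    rw [show 2 * (k + 1) - 1 = 2 * k + 1 by omega]
    congr 2
end

section
/- For all positive integers k₁, k₂, n₁, n₂, one has p_{k₁,n₁} = p_{k₂,n₂} if and only if k₁ = k₂ and n₁ = n₂; that is, the map (k,n) ↦ 2^{2n+k} − 3·2^{n+k−1} + 2^k − 3 is injective on pairs of positive integers. -/
/-- `p k n = 2^(2n+k) - 3·2^(n+k-1) + 2^k - 3` as an integer. -/
def pInt (k n : ℕ) : ℤ := 2 ^ (2 * n + k) - 3 * 2 ^ (n + k - 1) + 2 ^ k - 3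

private def G (m : ℕ) : ℤ := 2 ^ (2 * m + 2) - 3 * 2 ^ m + 1

private lemma G_strictMono : StrictMono G := by
  apply strictMono_nat_of_lt_succ
  intro m
  have hA : (2:ℤ) ^ m < 2 ^ (2 * m + 2) := by
    apply pow_lt_pow_right₀ one_lt_two; omega
  have e1 : (2:ℤ) ^ (2 * (m + 1) + 2) = 4 * 2 ^ (2 * m + 2) := by
    rw [show 2 * (m + 1) + 2 = (2 * m + 2) + 2 by ring, pow_add]; ring
  have e2 : (2:ℤ) ^ (m + 1) = 2 * 2 ^ m := by rw [pow_succ]; ring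
  simp only [G, e1, e2]
  linarith

private lemma G_zero : G 0 = 2 := by norm_num [G]

private lemma G_odd {m : ℕ} (hm : 1 ≤ m) : Odd (G m) := by
  obtain ⟨t, rfl⟩ : ∃ t, m = t + 1 := ⟨m - 1, by omega⟩
  refine ⟨2 ^ (2 * t + 3) - 3 * 2 ^ t, ?_⟩
  simp only [G]
  rw [show 2 * (t + 1) + 2 = (2 * t + 3) + 1 by ring, pow_succ, pow_succ]
  ring

private lemma key (j₁ m₁ j₂ m₂ : ℕ) (hle : j₁ ≤ j₂)
    (h : 2 ^ (j₁ + 1) * G m₁ = 2 ^ (j₂ + 1) * G m₂) : j₁ = j₂ ∧ m₁ = m₂ := by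
  obtain ⟨d, rfl⟩ := Nat.exists_eq_add_of_le hle
  have hp : ((2:ℤ) ^ (j₁ + 1)) ≠ 0 := by positivity
  have h2 : G m₁ = 2 ^ d * G m₂ := by
    apply mul_left_cancel₀ hp
    rw [h, show j₁ + d + 1 = (j₁ + 1) + d by ring, pow_add]; ring
  rcases Nat.eq_zero_or_pos d with hd | hd
  · subst hd
    simp only [pow_zero, one_mul] at h2
    exact ⟨by omega, G_strictMono.injective h2⟩
  · exfalso
    rcases Nat.eq_zero_or_pos m₁ with hm1 | hm1
    · subst hm1
      have h2d : (2:ℤ) ≤ 2 ^ d := by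
        calc (2:ℤ) = 2 ^ 1 := (pow_one 2).symm
        _ ≤ 2 ^ d := pow_le_pow_right₀ one_le_two hd
      rcases Nat.eq_zero_or_pos m₂ with hm2 | hm2
      · subst hm2
        rw [G_zero] at h2
        nlinarith
      · have h11 : (11:ℤ) ≤ G m₂ := by
          have : G 1 ≤ G m₂ := G_strictMono.monotone hm2
          have hg1 : G 1 = 11 := by norm_num [G]
          linarith
        rw [G_zero] at h2
        nlinarith
    · have hodd := G_odd hm1
      have heven : Even (2 ^ d * G m₂) := by
        obtain ⟨e, rfl⟩ : ∃ e, d = e + 1 := ⟨d - 1, by omega⟩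
        exact ⟨2 ^ e * G m₂, by rw [pow_succ]; ring⟩
      rw [← h2] at heven
      exact (Int.not_odd_iff_even.mpr heven) hodd

private lemma pInt_eq (j m : ℕ) : pInt (j + 1) (m + 1) = 2 ^ (j + 1) * G m - 3 := by
  simp only [pInt, G]
  rw [show m + 1 + (j + 1) - 1 = m + (j + 1) by omega,
    show 2 * (m + 1) + (j + 1) = (2 * m + 2) + (j + 1) by ring, pow_add, pow_add]
  ring

theorem pInt_injective (k₁ n₁ k₂ n₂ : ℕ) (hk₁ : 1 ≤ k₁) (hn₁ : 1 ≤ n₁)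
    (hk₂ : 1 ≤ k₂) (hn₂ : 1 ≤ n₂) :
    pInt k₁ n₁ = pInt k₂ n₂ ↔ k₁ = k₂ ∧ n₁ = n₂ := by
  obtain ⟨j₁, rfl⟩ : ∃ j, k₁ = j + 1 := ⟨k₁ - 1, by omega⟩
  obtain ⟨j₂, rfl⟩ : ∃ j, k₂ = j + 1 := ⟨k₂ - 1, by omega⟩
  obtain ⟨m₁, rfl⟩ : ∃ m, n₁ = m + 1 := ⟨n₁ - 1, by omega⟩
  obtain ⟨m₂, rfl⟩ : ∃ m, n₂ = m + 1 := ⟨n₂ - 1, by omega⟩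
  constructor
  · intro h
    rw [pInt_eq, pInt_eq] at h
    have h' : 2 ^ (j₁ + 1) * G m₁ = 2 ^ (j₂ + 1) * G m₂ := by linarith
    rcases le_total j₁ j₂ with hle | hle
    · obtain ⟨h1, h2⟩ := key j₁ m₁ j₂ m₂ hle h'
      exact ⟨by omega, by omega⟩
    · obtain ⟨h1, h2⟩ := key j₂ m₂ j₁ m₁ hle h'.symm
      exact ⟨by omega, by omega⟩
  · rintro ⟨h1, h2⟩
    simp_all
end
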